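/- arXiv:2112.02528 — 9 statements merged into one kernel-verified Lean document; each statement's English description precedes it below -/
import Mathlib

section
/- Let F be a field with a_0, a_1, a_2 ∈ F, a_0 ≠ 0. Then in F[[t]], (a_0 + a_1 t + a_2 t^2)^{-1} = Σ_{j≥0} c_j t^j where c_j = Σ_{k=0}^{⌊j/2⌋} (-1)^{j-k} binom(j-k, k) a_0^{-j+k-1} a_1^{j-2k} a_2^k. -/
/-!
Factoring out `a₀`, the series is `a₀ (1 - p X - q X²)` with `p = -a₁/a₀`, `q = -a₂/a₀`.
The coefficients of `(1 - p X - q X²)⁻¹` are determined by `b₀ = 1`, `b₁ = p` and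
`b (n + 2) = p b (n + 1) + q b n`, and Pascal's rule shows that
`∑ k, C(n - k, k) p^(n - 2k) q^k` satisfies the same recursion.
-/

open Finset PowerSeries

section CommRing
variable {R : Type*} [CommRing R] (p q : R)

lemma choose_succ_mul_pow_sub_mul (i k : ℕ) :
    (i.choose (k + 1) : R) * p ^ (i - (k + 1)) * p = i.choose (k + 1) * p ^ (i - k) := by
  rcases le_or_gt (k + 1) i with hki | hik
  · rw [mul_assoc, ← pow_succ, show i - (k + 1) + 1 = i - k by omega]
  · simp [Nat.choose_eq_zero_of_lt hik]

/-- Bivariate Fibonacci polynomials: `fibPoly 1 1 n = fib (n + 1)`. -/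
def fibPoly (n : ℕ) : R :=
  ∑ x ∈ antidiagonal n, (x.1.choose x.2 : R) * p ^ (x.1 - x.2) * q ^ x.2

lemma fibPoly_zero : fibPoly p q 0 = 1 := by simp [fibPoly]

lemma fibPoly_one : fibPoly p q 1 = p := by simp [fibPoly, Nat.sum_antidiagonal_succ]

lemma fibPoly_add_two (n : ℕ) :
    fibPoly p q (n + 2) = p * fibPoly p q (n + 1) + q * fibPoly p q n := by
  rw [fibPoly, Nat.sum_antidiagonal_succ, Nat.sum_antidiagonal_succ', fibPoly,
    Nat.sum_antidiagonal_succ', fibPoly]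
  simp only [Nat.choose_succ_succ, Nat.succ_sub_succ, Nat.choose_zero_succ, Nat.choose_zero_right,
    Nat.cast_add, Nat.cast_zero, Nat.cast_one, zero_mul, zero_add, Nat.sub_zero, pow_zero,
    one_mul, mul_one]
  rw [mul_add, ← pow_succ', mul_sum, mul_sum, add_assoc (p ^ _), ← sum_add_distrib]
  congr 1
  refine sum_congr rfl fun x _ => ?_
  linear_combination (-q ^ (x.2 + 1)) * choose_succ_mul_pow_sub_mul p x.1 x.2

lemma fibPoly_eq_sum_range (n : ℕ) :
    fibPoly p q n = ∑ k ∈ range (n / 2 + 1), ((n - k).choose k : R) * p ^ (n - 2 * k) * q ^ k := by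
  rw [fibPoly, ← Nat.sum_antidiagonal_swap, Nat.sum_antidiagonal_eq_sum_range_succ_mk]
  simp only [Prod.swap_prod_mk, Nat.sub_sub, ← two_mul]
  symm
  refine sum_subset (range_subset_range.2 (by omega)) fun k hk hk' => ?_
  simp only [mem_range] at hk hk'
  simp [Nat.choose_eq_zero_of_lt (show n - k < k by omega)]

lemma one_sub_mul_X_sub_mul_X_sq_mul_mk_fibPoly :
    (1 - C p * X - C q * X ^ 2) * PowerSeries.mk (fibPoly p q) = 1 := by
  ext (_ | _ | n) <;>
    simp [sub_mul, mul_assoc, coeff_X_pow_mul', fibPoly_zero, fibPoly_one, fibPoly_add_two]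

end CommRing

section Field
variable {F : Type*} [Field F]

lemma inv_one_sub_mul_X_sub_mul_X_sq (p q : F) :
    (1 - C p * X - C q * X ^ 2)⁻¹ = PowerSeries.mk (fibPoly p q) :=
  (PowerSeries.inv_eq_iff_mul_eq_one (by simp)).2 <| by
    rw [mul_comm, one_sub_mul_X_sub_mul_X_sq_mul_mk_fibPoly]

lemma quadratic_eq_C_mul {a0 : F} (a1 a2 : F) (h0 : a0 ≠ 0) :
    C a0 + C a1 * X + C a2 * X ^ 2 =
      C a0 * (1 - C (-(a1 * a0⁻¹)) * X - C (-(a2 * a0⁻¹)) * X ^ 2) := by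
  have h : C a0 * C a0⁻¹ = (1 : F⟦X⟧) := by rw [← map_mul, mul_inv_cancel₀ h0, map_one]
  simp only [map_neg, map_mul]
  linear_combination (-(C a1 * X + C a2 * X ^ 2)) * h

lemma fibPoly_neg_mul_inv_mul_inv (a0 a1 a2 : F) (j : ℕ) :
    fibPoly (-(a1 * a0⁻¹)) (-(a2 * a0⁻¹)) j * a0⁻¹ = ∑ k ∈ range (j / 2 + 1),
      (-1) ^ (j - k) * (j - k).choose k * a0⁻¹ ^ (j - k + 1) * a1 ^ (j - 2 * k) * a2 ^ k := by
  rw [fibPoly_eq_sum_range, sum_mul]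
  refine sum_congr rfl fun k hk => ?_
  obtain ⟨m, rfl⟩ : ∃ m, j = m + 2 * k := ⟨j - 2 * k, by rw [mem_range] at hk; omega⟩
  rw [show m + 2 * k - k = m + k by omega, Nat.add_sub_cancel]
  ring

end Field

/-- In `F⟦t⟧` over a field `F`, for `a₀ ≠ 0`:
`(a₀ + a₁ t + a₂ t²)⁻¹ = ∑_j c_j t^j` with
`c_j = ∑_{k=0}^{⌊j/2⌋} (-1)^{j-k} C(j-k, k) a₀^{-j+k-1} a₁^{j-2k} a₂^k`. -/
theorem inv_quadratic_powerSeries (F : Type*) [Field F] (a0 a1 a2 : F) (h0 : a0 ≠ 0) :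
    (PowerSeries.C (R := F) a0 + PowerSeries.C (R := F) a1 * PowerSeries.X
        + PowerSeries.C (R := F) a2 * PowerSeries.X ^ 2)⁻¹ =
      PowerSeries.mk (fun j => ∑ k ∈ Finset.range (j / 2 + 1),
        (-1) ^ (j - k) * (Nat.choose (j - k) k : F) *
          a0⁻¹ ^ (j - k + 1) * a1 ^ (j - 2 * k) * a2 ^ k) := by
  rw [quadratic_eq_C_mul a1 a2 h0, PowerSeries.mul_inv_rev, C_inv, inv_one_sub_mul_X_sub_mul_X_sq]
  ext j
  rw [coeff_mul_C, coeff_mk, coeff_mk, fibPoly_neg_mul_inv_mul_inv]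
end

section
/- Let F be a field of characteristic zero, P(t) = a_m t^m + ... + a_0 with a_0 ≠ 0, a_m ≠ 0, m ≥ 1, and let (c_j) be the coefficients of P(t)^{-1} in F[[t]]. Let f = Σ f_i x^i ∈ F[[x]]. If for every k there exists N such that c_j f_{k+j} = 0 for all j > N, then f is a polynomial. -/
/-!
Since `P` has degree exactly `m`, the coefficient of `t ^ (n + m)` in `c · P = 1` expresses
`c_n a_m` through `c_{n+1}, …, c_{n+m}`; as `c_0 ≠ 0`, the sequence `c` has no `m` consecutive
zeros. Hence every large index `i` is `k + j` with `k < m` and `c_j ≠ 0` for a large `j`, and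
then `c_j f_{k+j} = 0` forces `f_i = 0`.
-/

open Filter Finset

namespace PowerSeries

variable {R : Type*} [Semiring R] {g p : PowerSeries R} {m : ℕ}

theorem coeff_eq_zero_of_mul_eq_one_of_forall_mem_Ioc [NoZeroDivisors R] (hgp : g * p = 1)
    (hm : 0 < m) (hp : ∀ i, m < i → coeff i p = 0) (hpm : coeff m p ≠ 0) {n : ℕ}
    (hg : ∀ j ∈ Ioc n (n + m), coeff j g = 0) : coeff n g = 0 := by
  have hcoeff : coeff (n + m) (g * p) = 0 := by
    rw [hgp, coeff_one, if_neg (by omega)]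
  rw [coeff_mul, sum_eq_single_of_mem (n, m) (by simp)] at hcoeff
  · exact (mul_eq_zero.1 hcoeff).resolve_right hpm
  rintro ⟨i, l⟩ hil hne
  rw [HasAntidiagonal.mem_antidiagonal] at hil
  rcases lt_or_ge m l with hl | hl
  · rw [hp l hl, mul_zero]
  · rw [hg i (mem_Ioc.2 ⟨by grind, by omega⟩), zero_mul]

theorem exists_coeff_ne_zero_mem_Ico_of_mul_eq_one [NoZeroDivisors R] [Nontrivial R]
    (hgp : g * p = 1) (hm : 0 < m) (hp : ∀ i, m < i → coeff i p = 0) (hpm : coeff m p ≠ 0)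
    (n : ℕ) : ∃ j ∈ Ico n (n + m), coeff j g ≠ 0 := by
  by_contra! hg
  induction n with
  | zero =>
    have h0 : coeff 0 g * coeff 0 p = 1 := by
      simpa [coeff_zero_eq_constantCoeff] using congrArg (coeff 0) hgp
    rw [hg 0 (by simp [hm]), zero_mul] at h0
    exact zero_ne_one h0
  | succ n ih =>
    refine ih fun j hj => ?_
    obtain rfl | hj := eq_or_ne j n
    · exact coeff_eq_zero_of_mul_eq_one_of_forall_mem_Ioc hgp hm hp hpm
        fun i hi => hg i (by grind)
    · exact hg j (by grind)

end PowerSeries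

theorem exists_forall_ge_eq_zero_of_forall_mul_shift_eventually_eq_zero {R : Type*}
    [MulZeroClass R] [NoZeroDivisors R] {c u : ℕ → R} {m : ℕ}
    (hc : ∀ n, ∃ j ∈ Ico n (n + m), c j ≠ 0)
    (hu : ∀ k, ∃ N, ∀ j > N, c j * u (k + j) = 0) : ∃ N, ∀ i ≥ N, u i = 0 := by
  have huniform : ∀ᶠ j in atTop, ∀ k ∈ range m, c j * u (k + j) = 0 :=
    (eventually_all_finset _).2 fun k _ =>
      let ⟨N, hN⟩ := hu k; eventually_atTop.2 ⟨N + 1, fun j hj => hN j hj⟩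
  obtain ⟨N, hN⟩ := eventually_atTop.1 huniform
  refine ⟨N + m, fun i hi => ?_⟩
  obtain ⟨j, hj, hcj⟩ := hc (i + 1 - m)
  rw [mem_Ico] at hj
  have hij : i - j + j = i := by omega
  have hvanish := hN j (by omega) (i - j) (mem_range.2 (by omega))
  rw [hij] at hvanish
  exact (mul_eq_zero.1 hvanish).resolve_left hcj

theorem polynomial_of_coeffwise_convergence_general (F : Type*) [Field F]
    (m : ℕ) (hm : 1 ≤ m) (a : ℕ → F) (hmne : a m ≠ 0) (c : ℕ → F)
    (hc : PowerSeries.mk c *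
      (∑ i ∈ Finset.range (m + 1), PowerSeries.monomial i (a i)) = 1)
    (f : PowerSeries F)
    (hconv : ∀ k : ℕ, ∃ N : ℕ, ∀ j > N, c j * PowerSeries.coeff (k + j) f = 0) :
    ∃ N : ℕ, ∀ i ≥ N, PowerSeries.coeff i f = 0 := by
  have hcoeff (i : ℕ) :
      PowerSeries.coeff i (∑ i ∈ Finset.range (m + 1), PowerSeries.monomial i (a i)) =
        if i < m + 1 then a i else 0 := by
    simp [PowerSeries.coeff_monomial]
  have hwindow := PowerSeries.exists_coeff_ne_zero_mem_Ico_of_mul_eq_one hc hm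
    (fun i hi => by rw [hcoeff, if_neg (by omega)]) (by rwa [hcoeff, if_pos (by omega)])
  simp only [PowerSeries.coeff_mk] at hwindow
  exact exists_forall_ge_eq_zero_of_forall_mul_shift_eventually_eq_zero hwindow hconv

/-- Convergence criterion: with `c` the coefficients of `P(t)⁻¹` (`a 0 ≠ 0`, `a m ≠ 0`,
`m ≥ 1`), if for every `k` the products `c j * f_{k+j}` vanish for all large `j`,
then the power series `f` is a polynomial. -/
theorem polynomial_of_coeffwise_convergence (F : Type*) [Field F] [CharZero F]
    (m : ℕ) (hm : 1 ≤ m) (a : ℕ → F) (h0 : a 0 ≠ 0) (hmne : a m ≠ 0) (c : ℕ → F)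
    (hc : PowerSeries.mk c *
      (∑ i ∈ Finset.range (m + 1), PowerSeries.monomial i (a i)) = 1)
    (f : PowerSeries F)
    (hconv : ∀ k : ℕ, ∃ N : ℕ, ∀ j > N, c j * PowerSeries.coeff (k + j) f = 0) :
    ∃ N : ℕ, ∀ i ≥ N, PowerSeries.coeff i f = 0 :=
  polynomial_of_coeffwise_convergence_general F m hm a hmne c hc f hconv
end

section
/- Let F be a field of characteristic zero equipped with a non-Archimedean absolute value |·|, and let a_0, ..., a_m ∈ F with |a_0| = 1 and |a_i| < 1 for 1 ≤ i ≤ m. If a formal power series y = Σ y_k x^k with all |y_k| ≤ 1 satisfies the homogeneous equation a_m y^{(m)} + ... + a_1 y' + a_0 y = 0 (formal derivatives in F[[x]]), then y = 0. -/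
/-!
Comparing coefficients of `x^k` turns the equation into the recursion
`a₀ y_k = -∑_{i=1}^m a_i (k+1)⋯(k+i) y_{k+i}`. The integer factors have norm at most `1` in a
non-Archimedean field, so if all coefficients are bounded by `r` then the ultrametric inequality
bounds each `y_k` by `b r`, where `b = max_{1 ≤ i ≤ m} |a_i| < 1`. Iterating from `r = 1` gives
`|y_k| ≤ bⁿ` for every `n`, hence `y = 0`.
-/

open PowerSeries Finset Filter

lemma norm_eq_zero_of_norm_le_one_of_norm_le_mul {ι E : Type*} [SeminormedAddGroup E]
    {c : ι → E} {b : ℝ} (hb0 : 0 ≤ b) (hb1 : b < 1) (hc : ∀ k, ‖c k‖ ≤ 1)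
    (hstep : ∀ r, (∀ k, ‖c k‖ ≤ r) → ∀ k, ‖c k‖ ≤ b * r) (k : ι) : ‖c k‖ = 0 := by
  have hpow : ∀ n k, ‖c k‖ ≤ b ^ n := by
    intro n
    induction n with
    | zero => simpa using hc
    | succ n ih => simpa [pow_succ', mul_comm] using hstep _ ih
  have hlim : Tendsto (b ^ ·) atTop (nhds 0) := tendsto_pow_atTop_nhds_zero_of_lt_one hb0 hb1
  exact le_antisymm (ge_of_tendsto' hlim fun n => hpow n k) (norm_nonneg _)

lemma PowerSeries.norm_coeff_le_mul_of_sum_C_mul_iterate_derivative_eq_zero {F : Type*}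
    [NormedField F] [IsUltrametricDist F] {m : ℕ} {a : ℕ → F} {b r : ℝ} (h0 : ‖a 0‖ = 1)
    (hb : ∀ i ∈ range m, ‖a (i + 1)‖ ≤ b) (hb0 : 0 ≤ b) {y : F⟦X⟧}
    (hyr : ∀ k, ‖coeff k y‖ ≤ r)
    (heq : ∑ i ∈ range (m + 1), C (a i) * (d⁄dX F)^[i] y = 0) (k : ℕ) :
    ‖coeff k y‖ ≤ b * r := by
  have hr : 0 ≤ r := (norm_nonneg _).trans (hyr 0)
  have hk := congrArg (coeff k) heq
  rw [sum_range_succ', map_add, map_sum, map_zero] at hk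
  simp only [coeff_C_mul, coeff_iterate_derivative, Function.iterate_zero, id_eq] at hk
  calc ‖coeff k y‖ = ‖a 0 * coeff k y‖ := by rw [norm_mul, h0, one_mul]
    _ = ‖∑ i ∈ range m, a (i + 1) * ((k + 1).ascFactorial (i + 1) * coeff (k + (i + 1)) y)‖ := by
      rw [eq_neg_of_add_eq_zero_right hk, norm_neg]
    _ ≤ b * r := by
      refine IsUltrametricDist.norm_sum_le_of_forall_le_of_nonneg (by positivity) fun i hi => ?_
      rw [norm_mul, norm_mul, ← one_mul r]
      gcongr
      exacts [hb i hi, IsUltrametricDist.norm_natCast_le_one F _, hyr _]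

theorem homogeneous_nonarchimedean_unique_general (F : Type*) [NormedField F]
    (hna : ∀ x y : F, ‖x + y‖ ≤ max ‖x‖ ‖y‖)
    (m : ℕ) (a : ℕ → F) (h0 : ‖a 0‖ = 1) (ha : ∀ i, 1 ≤ i → i ≤ m → ‖a i‖ < 1)
    (y : PowerSeries F) (hy : ∀ k, ‖PowerSeries.coeff k y‖ ≤ 1)
    (heq : ∑ i ∈ Finset.range (m + 1),
      PowerSeries.C (a i) * (PowerSeries.derivativeFun^[i] y) = 0) :
    y = 0 := by
  have := IsUltrametricDist.isUltrametricDist_of_forall_norm_add_le_max_norm hna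
  set b : NNReal := (range m).sup fun i => ‖a (i + 1)‖₊
  have hb1 : b < 1 := by
    refine (Finset.sup_lt_iff zero_lt_one).2 fun i hi => ?_
    exact_mod_cast ha (i + 1) le_add_self (mem_range.1 hi)
  have hab : ∀ i ∈ range m, ‖a (i + 1)‖ ≤ b := fun i hi =>
    Finset.le_sup (f := fun i => ‖a (i + 1)‖₊) hi
  ext k
  simpa using norm_eq_zero_of_norm_le_one_of_norm_le_mul b.2 hb1 hy
    (fun r hr => norm_coeff_le_mul_of_sum_C_mul_iterate_derivative_eq_zero h0 hab b.2 hr heq) k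

/-- Over a non-Archimedean valued field of characteristic zero, with `|a 0| = 1` and
`|a i| < 1` for `1 ≤ i ≤ m`, any solution `y ∈ K⟦x⟧` (all coefficients of norm at most 1)
of the homogeneous equation `a_m y^{(m)} + ... + a_1 y' + a_0 y = 0` is zero. -/
theorem homogeneous_nonarchimedean_unique (F : Type*) [NormedField F] [CharZero F]
    (hna : ∀ x y : F, ‖x + y‖ ≤ max ‖x‖ ‖y‖)
    (m : ℕ) (a : ℕ → F) (h0 : ‖a 0‖ = 1) (ha : ∀ i, 1 ≤ i → i ≤ m → ‖a i‖ < 1)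
    (y : PowerSeries F) (hy : ∀ k, ‖PowerSeries.coeff k y‖ ≤ 1)
    (heq : ∑ i ∈ Finset.range (m + 1),
      PowerSeries.C (a i) * (PowerSeries.derivativeFun^[i] y) = 0) :
    y = 0 :=
  homogeneous_nonarchimedean_unique_general F hna m a h0 ha y hy heq
end

section
/- Let F be a field of characteristic zero with a non-Archimedean absolute value, K its valuation ring, and a_0, ..., a_m ∈ K with |a_0| = 1, |a_i| < 1 for 1 ≤ i ≤ m. Then for any f ∈ K[[x]], the equation a_m w^{(m)} + ... + a_1 w' + a_0 w = f has at most one solution w ∈ K[[x]]. -/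
/-!
Subtracting two solutions, it suffices that a solution `w ∈ K⟦X⟧` of the homogeneous equation
vanishes. Comparing `X^k`-coefficients gives
`a₀ w_k = -∑_{1 ≤ i ≤ m} a_i (k + 1)(k + 2)⋯(k + i) w_{k+i}`. Integers have norm `≤ 1` in a
non-archimedean field and `‖a_i‖ ≤ ρ < 1` for `i ≥ 1`, so a uniform bound `B` on the coefficients
of `w` improves to `ρ B`; hence every coefficient is bounded by all powers `ρ^N`.
-/

open PowerSeries Finset IsUltrametricDist

theorem Finset.exists_nonneg_lt_one_forall_le {ι : Type*} (s : Finset ι) (g : ι → ℝ)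
    (hg : ∀ i ∈ s, g i < 1) : ∃ ρ, 0 ≤ ρ ∧ ρ < 1 ∧ ∀ i ∈ s, g i ≤ ρ := by
  rcases s.eq_empty_or_nonempty with rfl | hs
  · exact ⟨0, le_rfl, one_pos, by simp⟩
  obtain ⟨j, hj, hmax⟩ := s.exists_max_image g hs
  exact ⟨max 0 (g j), le_max_left _ _, max_lt one_pos (hg j hj),
    fun i hi => (hmax i hi).trans (le_max_right _ _)⟩

namespace PowerSeries

section DiffOp

variable {R : Type*} [CommSemiring R]

set_option linter.deprecated false in
theorem iterate_derivativeFun (n : ℕ) : (derivativeFun (R := R))^[n] = (d⁄dX R)^[n] := rfl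

noncomputable def diffOp (a : ℕ → R) (m : ℕ) : Module.End R R⟦X⟧ :=
  ∑ i ∈ range (m + 1), a i • (d⁄dX R : Module.End R R⟦X⟧) ^ i

theorem diffOp_apply (a : ℕ → R) (m : ℕ) (w : R⟦X⟧) :
    diffOp a m w = ∑ i ∈ range (m + 1), C (a i) * (d⁄dX R)^[i] w := by
  simp [diffOp, LinearMap.sum_apply, Module.End.pow_apply, smul_eq_C_mul]

theorem coeff_diffOp (a : ℕ → R) (m : ℕ) (w : R⟦X⟧) (k : ℕ) :
    coeff k (diffOp a m w) =
      ∑ i ∈ range (m + 1), a i * (k + 1).ascFactorial i * coeff (k + i) w := by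
  simp [diffOp_apply, map_sum, coeff_C_mul, coeff_iterate_derivative, mul_assoc]

end DiffOp

section Ultrametric

variable {F : Type*} [NormedField F] [IsUltrametricDist F] {a : ℕ → F} {m : ℕ} {w : F⟦X⟧}

theorem norm_coeff_le_mul_of_diffOp_eq_zero {ρ B : ℝ} (h0 : ‖a 0‖ = 1)
    (ha : ∀ i ∈ Icc 1 m, ‖a i‖ ≤ ρ) (hρ : 0 ≤ ρ) (hL : diffOp a m w = 0)
    (hB : ∀ k, ‖coeff k w‖ ≤ B) (k : ℕ) : ‖coeff k w‖ ≤ ρ * B := by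
  have hrec : a 0 * coeff k w =
      -∑ i ∈ range m, a (i + 1) * (k + 1).ascFactorial (i + 1) * coeff (k + (i + 1)) w := by
    have := congrArg (coeff k) hL
    rw [coeff_diffOp, sum_range_succ'] at this
    simpa [eq_neg_iff_add_eq_zero, add_comm] using this
  calc ‖coeff k w‖ = ‖a 0 * coeff k w‖ := by rw [norm_mul, h0, one_mul]
    _ ≤ ρ * B := by
      rw [hrec, norm_neg]
      refine norm_sum_le_of_forall_le_of_nonneg (mul_nonneg hρ ((norm_nonneg _).trans (hB 0)))
        fun i hi => ?_
      calc ‖a (i + 1) * (k + 1).ascFactorial (i + 1) * coeff (k + (i + 1)) w‖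
          ≤ ρ * 1 * B := by
            rw [norm_mul, norm_mul]
            gcongr
            · exact ha _ (by simp at hi ⊢; omega)
            · exact norm_natCast_le_one F _
            · exact hB _
        _ = ρ * B := by rw [mul_one]

theorem eq_zero_of_diffOp_eq_zero (h0 : ‖a 0‖ = 1) (ha : ∀ i ∈ Icc 1 m, ‖a i‖ < 1)
    (hw : ∀ k, ‖coeff k w‖ ≤ 1) (hL : diffOp a m w = 0) : w = 0 := by
  obtain ⟨ρ, hρ0, hρ1, hρ⟩ := (Icc 1 m).exists_nonneg_lt_one_forall_le _ ha
  have hpow : ∀ N k, ‖coeff k w‖ ≤ ρ ^ N := by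
    intro N
    induction N with
    | zero => simpa using hw
    | succ N ih =>
      rw [pow_succ']
      exact norm_coeff_le_mul_of_diffOp_eq_zero h0 hρ hρ0 hL ih
  ext k
  simpa using ge_of_tendsto' (tendsto_pow_atTop_nhds_zero_of_lt_one hρ0 hρ1) (fun N => hpow N k)

end Ultrametric

end PowerSeries

theorem nonarchimedean_uniqueness_general (F : Type*) [NormedField F]
    (hna : ∀ x y : F, ‖x + y‖ ≤ max ‖x‖ ‖y‖)
    (m : ℕ) (a : ℕ → F) (h0 : ‖a 0‖ = 1) (ha : ∀ i, 1 ≤ i → i ≤ m → ‖a i‖ < 1)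
    (f w₁ w₂ : PowerSeries F)
    (hw₁ : ∀ k, ‖PowerSeries.coeff k w₁‖ ≤ 1)
    (hw₂ : ∀ k, ‖PowerSeries.coeff k w₂‖ ≤ 1)
    (heq₁ : ∑ i ∈ Finset.range (m + 1),
      PowerSeries.C (a i) * (PowerSeries.derivativeFun^[i] w₁) = f)
    (heq₂ : ∑ i ∈ Finset.range (m + 1),
      PowerSeries.C (a i) * (PowerSeries.derivativeFun^[i] w₂) = f) :
    w₁ = w₂ := by
  have : IsUltrametricDist F := isUltrametricDist_of_forall_norm_add_le_max_norm hna
  rw [← sub_eq_zero]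
  refine eq_zero_of_diffOp_eq_zero h0 (fun i hi => ha i (mem_Icc.1 hi).1 (mem_Icc.1 hi).2)
    (fun k => ?_) ?_
  · rw [map_sub, sub_eq_add_neg]
    exact (hna _ _).trans (max_le (hw₁ k) (by simpa using hw₂ k))
  · simp only [map_sub, diffOp_apply, ← iterate_derivativeFun, heq₁, heq₂, sub_self]

/-- Over a non-Archimedean valued field of characteristic zero with valuation ring
`K = {s : ‖s‖ ≤ 1}`, with `‖a 0‖ = 1` and `‖a i‖ < 1` for `1 ≤ i ≤ m`, the equation
`a_m w^{(m)} + ... + a_0 w = f` has at most one solution in `K⟦x⟧`. -/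
theorem nonarchimedean_uniqueness (F : Type*) [NormedField F] [CharZero F]
    (hna : ∀ x y : F, ‖x + y‖ ≤ max ‖x‖ ‖y‖)
    (m : ℕ) (a : ℕ → F) (h0 : ‖a 0‖ = 1) (ha : ∀ i, 1 ≤ i → i ≤ m → ‖a i‖ < 1)
    (f w₁ w₂ : PowerSeries F)
    (hw₁ : ∀ k, ‖PowerSeries.coeff k w₁‖ ≤ 1)
    (hw₂ : ∀ k, ‖PowerSeries.coeff k w₂‖ ≤ 1)
    (heq₁ : ∑ i ∈ Finset.range (m + 1),
      PowerSeries.C (a i) * (PowerSeries.derivativeFun^[i] w₁) = f)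
    (heq₂ : ∑ i ∈ Finset.range (m + 1),
      PowerSeries.C (a i) * (PowerSeries.derivativeFun^[i] w₂) = f) :
    w₁ = w₂ :=
  nonarchimedean_uniqueness_general F hna m a h0 ha f w₁ w₂ hw₁ hw₂ heq₁ heq₂
end

section
/- Let F be a field of characteristic zero, complete with respect to a non-Archimedean absolute value, a_0, ..., a_m ∈ F with |a_0| = 1 and |a_i| < 1 for 1 ≤ i ≤ m, and let (c_j) be the coefficients of (a_m t^m + ... + a_0)^{-1} in F[[t]]. Set b = max_{1≤i≤m} |a_i| < 1. Then |c_j| ≤ b^{⌊j/m⌋} for all j; in particular c_j → 0. -/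
/-!
Comparing coefficients in `c · (a_0 + ⋯ + a_m t^m) = 1` gives, for `j > 0`,
`c_j a_0 = -∑_{0 < k ≤ m} c_{j-k} a_k`. Since `|a_0| = 1`, the ultrametric inequality bounds
`|c_j|` by the largest `|c_{j-k}| |a_k| ≤ b^{⌊(j-k)/m⌋ + 1}`, and `⌊(j-k)/m⌋ + 1 ≥ ⌊j/m⌋`
because `k ≤ m`; strong induction on `j` gives `|c_j| ≤ b^{⌊j/m⌋}`.
-/

open PowerSeries

theorem Nat.div_le_div_add_one_of_le_add {i j m : ℕ} (h : j ≤ i + m) : j / m ≤ i / m + 1 := by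
  rcases m.eq_zero_or_pos with rfl | hm
  · simp
  · exact (Nat.div_le_div_right h).trans_eq (Nat.add_div_right i hm)

theorem PowerSeries.coeff_sum_monomial_range {R : Type*} [Semiring R] (a : ℕ → R) (n k : ℕ) :
    coeff k (∑ i ∈ Finset.range n, monomial i (a i)) = if k < n then a k else 0 := by
  simp [coeff_monomial]

theorem PowerSeries.coeff_mul_constantCoeff_of_mul_eq_one {R : Type*} [CommRing R]
    {f g : R⟦X⟧} (hfg : f * g = 1) {j : ℕ} (hj : j ≠ 0) :
    coeff j f * constantCoeff g = -∑ i ∈ Finset.range j, coeff i f * coeff (j - i) g := by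
  have h := congrArg (coeff j) hfg
  rw [coeff_mul, Finset.Nat.sum_antidiagonal_eq_sum_range_succ_mk, Finset.sum_range_succ,
    coeff_one, if_neg hj, Nat.sub_self, coeff_zero_eq_constantCoeff_apply] at h
  exact eq_neg_of_add_eq_zero_right h

theorem PowerSeries.nnnorm_coeff_le_pow_div_of_mul_eq_one {F : Type*} [NormedField F]
    [IsUltrametricDist F] {f g : F⟦X⟧} {m : ℕ} {b : NNReal} (hfg : f * g = 1)
    (h0 : 1 ≤ ‖constantCoeff g‖₊) (hb : b ≤ 1)
    (hsmall : ∀ i, 1 ≤ i → i ≤ m → ‖coeff i g‖₊ ≤ b) (hdeg : ∀ i, m < i → coeff i g = 0)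
    (j : ℕ) : ‖coeff j f‖₊ ≤ b ^ (j / m) := by
  induction j using Nat.strong_induction_on with
  | _ j ih =>
  have hle : ‖coeff j f‖₊ ≤ ‖coeff j f * constantCoeff g‖₊ := by
    rw [nnnorm_mul]
    exact le_mul_of_one_le_right' h0
  rcases eq_or_ne j 0 with rfl | hj
  · refine hle.trans_eq ?_
    rw [coeff_zero_eq_constantCoeff_apply, ← map_mul, hfg, map_one, nnnorm_one, Nat.zero_div,
      pow_zero]
  refine hle.trans ?_
  rw [coeff_mul_constantCoeff_of_mul_eq_one hfg hj, nnnorm_neg]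
  refine IsUltrametricDist.nnnorm_sum_le_of_forall_le fun i hi => ?_
  rw [Finset.mem_range] at hi
  by_cases hjm : j - i ≤ m
  · calc ‖coeff i f * coeff (j - i) g‖₊ ≤ b ^ (i / m) * b :=
          (nnnorm_mul_le _ _).trans (mul_le_mul' (ih i hi) (hsmall _ (by omega) hjm))
      _ = b ^ (i / m + 1) := (pow_succ _ _).symm
      _ ≤ b ^ (j / m) :=
          pow_le_pow_right_of_le_one' hb (Nat.div_le_div_add_one_of_le_add (by omega))
  · simp [hdeg _ (not_le.mp hjm)]

theorem inverse_coeffs_bound_general (F : Type*) [NormedField F]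
    (hna : ∀ x y : F, ‖x + y‖ ≤ max ‖x‖ ‖y‖)
    (m : ℕ) (hm : 1 ≤ m) (a : ℕ → F) (h0 : ‖a 0‖ = 1)
    (ha : ∀ i, 1 ≤ i → i ≤ m → ‖a i‖ < 1) (c : ℕ → F)
    (hc : PowerSeries.mk c *
      (∑ i ∈ Finset.range (m + 1), PowerSeries.monomial i (a i)) = 1) :
    (∀ j : ℕ, ‖c j‖₊ ≤ ((Finset.Icc 1 m).sup fun i => ‖a i‖₊) ^ (j / m)) ∧
      Filter.Tendsto (fun j => c j) Filter.atTop (nhds 0) := by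
  have : IsUltrametricDist F := .isUltrametricDist_of_isNonarchimedean_norm hna
  set b := (Finset.Icc 1 m).sup fun i => ‖a i‖₊
  set g := ∑ i ∈ Finset.range (m + 1), monomial i (a i)
  have hb : b < 1 := Finset.sup_lt_iff one_pos |>.2 fun i hi =>
    (Finset.mem_Icc.mp hi).elim (ha i)
  have hg (k : ℕ) : coeff k g = if k < m + 1 then a k else 0 := coeff_sum_monomial_range a _ k
  have hg0 : 1 ≤ ‖constantCoeff g‖₊ := by
    rw [← coeff_zero_eq_constantCoeff_apply, hg, if_pos m.succ_pos, ← NNReal.coe_le_coe,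
      coe_nnnorm, h0, NNReal.coe_one]
  have hsmall (i : ℕ) (hi : 1 ≤ i) (him : i ≤ m) : ‖coeff i g‖₊ ≤ b := by
    rw [hg, if_pos (by omega)]
    exact Finset.le_sup (f := fun i => ‖a i‖₊) (Finset.mem_Icc.mpr ⟨hi, him⟩)
  have hdeg (i : ℕ) (hi : m < i) : coeff i g = 0 := by
    rw [hg, if_neg (by omega)]
  have hbound (j : ℕ) : ‖c j‖₊ ≤ b ^ (j / m) := by
    simpa using nnnorm_coeff_le_pow_div_of_mul_eq_one hc hg0 hb.le hsmall hdeg j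
  refine ⟨hbound, squeeze_zero_norm (fun j => NNReal.coe_le_coe.mpr (hbound j)) ?_⟩
  exact (tendsto_pow_atTop_nhds_zero_of_lt_one b.coe_nonneg hb).comp
    (Nat.tendsto_div_const_atTop (by omega))

/-- Over a complete non-Archimedean valued field of characteristic zero, with `‖a 0‖ = 1`
and `‖a i‖ < 1` for `1 ≤ i ≤ m`, the coefficients `c j` of `(a_m t^m + ... + a_0)⁻¹`
satisfy `‖c j‖ ≤ b ^ ⌊j/m⌋` where `b = max_{1 ≤ i ≤ m} ‖a i‖ < 1`; in particular
`c j → 0`. -/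
theorem inverse_coeffs_bound (F : Type*) [NormedField F] [CharZero F] [CompleteSpace F]
    (hna : ∀ x y : F, ‖x + y‖ ≤ max ‖x‖ ‖y‖)
    (m : ℕ) (hm : 1 ≤ m) (a : ℕ → F) (h0 : ‖a 0‖ = 1)
    (ha : ∀ i, 1 ≤ i → i ≤ m → ‖a i‖ < 1) (c : ℕ → F)
    (hc : PowerSeries.mk c *
      (∑ i ∈ Finset.range (m + 1), PowerSeries.monomial i (a i)) = 1) :
    (∀ j : ℕ, ‖c j‖₊ ≤ ((Finset.Icc 1 m).sup fun i => ‖a i‖₊) ^ (j / m)) ∧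
      Filter.Tendsto (fun j => c j) Filter.atTop (nhds 0) :=
  inverse_coeffs_bound_general F hna m hm a h0 ha c hc
end

section
/- Let a_0, ..., a_m be integers, p a prime not dividing a_0, and f ∈ ℤ_p[[x]]. Then the equation a_m w^{(m)} + ... + a_1 w' + a_0 w = f has a unique solution w ∈ ℤ_p[[x]]. -/
/-!
Write the equation as `a₀ (w - N w) = f`, where `N = -a₀⁻¹ ∑_{i ≥ 1} aᵢ Dⁱ`; `a₀` is a `p`-adic
unit because `p ∤ a₀`. The `n`-th coefficient of `Dⁱ w` is `(n+1)(n+2)⋯(n+i) w_{n+i}`, so `N`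
maps series whose `n`-th coefficient is divisible by `(n+1)⋯(n+k)` to series with the same
property for `k + 1`. Hence every coefficient of `Nᵏ g` is divisible by `k!`, and `|k!|_p → 0`.
This makes the Neumann series `∑ Nᵏ (a₀⁻¹ f)` converge coefficientwise to a solution, and forces
a fixed point `e = N e = Nᵏ e` of `N`, i.e. the difference of two solutions, to vanish.
-/

open Finset Filter Topology PowerSeries
open scoped Nat

namespace PowerSeries

variable {R : Type*} [CommRing R]

variable (R) in
def ascFactorialFiltration (k : ℕ) : Submodule R R⟦X⟧ where
  carrier := {f | ∀ n, ((n + 1).ascFactorial k : R) ∣ coeff n f}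
  add_mem' hf hg n := by simpa only [map_add] using dvd_add (hf n) (hg n)
  zero_mem' n := by simp
  smul_mem' c f hf n := by simpa only [coeff_smul, smul_eq_mul] using (hf n).mul_left c

theorem factorial_dvd_coeff_of_mem_ascFactorialFiltration {k : ℕ} {f : R⟦X⟧}
    (hf : f ∈ ascFactorialFiltration R k) (n : ℕ) : (k ! : R) ∣ coeff n f :=
  (Nat.cast_dvd_cast (Nat.factorial_dvd_ascFactorial _ _)).trans (hf n)

theorem iterate_derivative_mem_ascFactorialFiltration_succ {k : ℕ} {f : R⟦X⟧}
    (hf : f ∈ ascFactorialFiltration R k) (i : ℕ) :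
    (d⁄dX R)^[i + 1] f ∈ ascFactorialFiltration R (k + 1) := by
  intro n
  have hdvd : (n + 1).ascFactorial (k + 1) ∣
      (n + 1).ascFactorial (i + 1) * (n + 1 + (i + 1)).ascFactorial k := by
    rw [Nat.ascFactorial_mul_ascFactorial, show i + 1 + k = (k + 1) + i by ring]
    exact Dvd.intro _ (Nat.ascFactorial_mul_ascFactorial _ _ _)
  rw [coeff_iterate_derivative]
  refine (Nat.cast_dvd_cast hdvd).trans ?_
  rw [Nat.cast_mul]
  exact mul_dvd_mul_left _ (by simpa only [add_right_comm n 1] using hf (n + (i + 1)))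

def ShiftsAscFactorialFiltration (N : Module.End R R⟦X⟧) : Prop :=
  ∀ k, ∀ f ∈ ascFactorialFiltration R k, N f ∈ ascFactorialFiltration R (k + 1)

theorem shiftsAscFactorialFiltration_sum_smul_derivative_pow (c : ℕ → R) (m : ℕ) :
    ShiftsAscFactorialFiltration
      (∑ i ∈ range m, c i • (d⁄dX R : Module.End R R⟦X⟧) ^ (i + 1)) := by
  intro k f hf
  rw [LinearMap.sum_apply]
  refine Submodule.sum_mem _ fun i _ => Submodule.smul_mem _ _ ?_
  rw [Module.End.pow_apply]
  exact iterate_derivative_mem_ascFactorialFiltration_succ hf i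

theorem ShiftsAscFactorialFiltration.pow_apply_mem {N : Module.End R R⟦X⟧}
    (hN : ShiftsAscFactorialFiltration N) (k : ℕ) (f : R⟦X⟧) :
    (N ^ k) f ∈ ascFactorialFiltration R k := by
  induction k with
  | zero => intro n; simp
  | succ k ih => rw [pow_succ', Module.End.mul_apply]; exact hN k _ ih

set_option linter.deprecated false in
theorem sum_C_mul_iterate_derivativeFun_eq_smul_sub {a : ℕ → R} {v : R} (hv : v * a 0 = 1)
    (m : ℕ) (w : R⟦X⟧) :
    ∑ i ∈ range (m + 1), C (a i) * derivativeFun^[i] w =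
      a 0 • (w - (∑ i ∈ range m,
        (-(v * a (i + 1))) • (d⁄dX R : Module.End R R⟦X⟧) ^ (i + 1)) w) := by
  rw [sum_range_succ', add_comm, smul_sub, LinearMap.sum_apply, smul_sum, sub_eq_add_neg,
    ← sum_neg_distrib, Function.iterate_zero_apply, smul_eq_C_mul]
  congr 1
  refine sum_congr rfl fun i _ => ?_
  rw [LinearMap.smul_apply, Module.End.pow_apply, smul_smul, mul_neg, ← mul_assoc,
    mul_comm (a 0), hv, one_mul, neg_smul, neg_neg, smul_eq_C_mul]
  -- `derivativeFun` is the bare function underlying `d⁄dX R`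
  rfl

namespace WithPiTopology

variable [TopologicalSpace R] [IsTopologicalRing R]

theorem continuous_derivative : Continuous (d⁄dX R) := by
  refine continuous_iff_continuousAt.mpr fun f => ?_
  rw [ContinuousAt, tendsto_iff_coeff_tendsto]
  intro n
  simp only [coeff_derivative]
  exact ((continuous_coeff R (n + 1)).mul continuous_const).continuousAt

theorem continuous_sum_smul_derivative_pow (c : ℕ → R) (m : ℕ) :
    Continuous (DFunLike.coe (∑ i ∈ range m, c i • (d⁄dX R : Module.End R R⟦X⟧) ^ (i + 1))) := by
  rw [LinearMap.coe_sum, Finset.sum_fn]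
  refine continuous_finsetSum _ fun i _ => ?_
  rw [LinearMap.coe_smul, Module.End.coe_pow]
  exact (continuous_derivative.iterate _).const_smul _

end WithPiTopology

end PowerSeries

theorem HasSum.sub_apply_eq {R M : Type*} [Semiring R] [AddCommGroup M]
    [Module R M] [TopologicalSpace M] [IsTopologicalAddGroup M] [T2Space M] {N : Module.End R M}
    (hN : Continuous N) {g s : M} (h : HasSum (fun k => (N ^ k) g) s) : s - N s = g := by
  have hshift : HasSum (fun k => (N ^ (k + 1)) g) (s - g) := by
    simpa using (hasSum_nat_add_iff' 1).mpr h
  have hmap : HasSum (fun k => (N ^ (k + 1)) g) (N s) := by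
    simpa only [Function.comp_def, pow_succ', Module.End.mul_apply] using h.map N hN
  rw [hmap.unique hshift, sub_sub_cancel]

namespace PadicInt

variable {p : ℕ} [Fact p.Prime]

theorem isUnit_intCast_of_not_dvd {z : ℤ} (hz : ¬(p : ℤ) ∣ z) : IsUnit (z : ℤ_[p]) :=
  isUnit_iff.mpr ((norm_le_one _).antisymm (not_lt.mp (mt norm_intCast_lt_one_iff.mp hz)))

theorem pow_div_dvd_factorial (k : ℕ) : p ^ (k / p) ∣ k ! := by
  refine (pow_dvd_pow p ?_).trans pow_padicValNat_dvd
  rw [← padicValNat_mul_div_factorial, padicValNat_factorial_mul]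
  exact Nat.le_add_left _ _

theorem tendsto_norm_factorial : Tendsto (fun k => ‖(k ! : ℤ_[p])‖) atTop (𝓝 0) := by
  have hp := (Fact.out : p.Prime)
  have hle : ∀ k, ‖(k ! : ℤ_[p])‖ ≤ (p : ℝ)⁻¹ ^ (k / p) := fun k => by
    have := norm_int_le_pow_iff_dvd.mpr
      (Int.natCast_dvd_natCast.mpr (pow_div_dvd_factorial (p := p) k))
    rwa [Int.cast_natCast, zpow_neg, zpow_natCast, ← inv_pow] at this
  refine squeeze_zero (fun _ => norm_nonneg _) hle ?_
  refine (tendsto_pow_atTop_nhds_zero_of_lt_one (by positivity) ?_).comp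
    (Nat.tendsto_div_const_atTop hp.ne_zero)
  exact inv_lt_one_of_one_lt₀ (mod_cast hp.one_lt)

theorem tendsto_zero_of_factorial_dvd {x : ℕ → ℤ_[p]} (hx : ∀ k, (k ! : ℤ_[p]) ∣ x k) :
    Tendsto x atTop (𝓝 0) := by
  refine tendsto_zero_iff_norm_tendsto_zero.mpr
    (squeeze_zero (fun _ => norm_nonneg _) (fun k => ?_) (tendsto_norm_factorial (p := p)))
  obtain ⟨c, hc⟩ := hx k
  rw [hc, norm_mul]
  exact mul_le_of_le_one_right (norm_nonneg _) (norm_le_one c)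

theorem eq_zero_of_forall_factorial_dvd {x : ℤ_[p]} (hx : ∀ k, (k ! : ℤ_[p]) ∣ x) : x = 0 :=
  tendsto_nhds_unique tendsto_const_nhds (tendsto_zero_of_factorial_dvd hx)

end PadicInt

namespace PowerSeries.ShiftsAscFactorialFiltration

open WithPiTopology

variable {p : ℕ} [Fact p.Prime] {N : Module.End ℤ_[p] ℤ_[p]⟦X⟧}

theorem summable_pow_apply (hN : ShiftsAscFactorialFiltration N) (g : ℤ_[p]⟦X⟧) :
    Summable fun k => (N ^ k) g := by
  refine (summable_iff_summable_coeff _).mpr fun n =>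
    NonarchimedeanAddGroup.summable_of_tendsto_cofinite_zero ?_
  rw [Nat.cofinite_eq_atTop]
  exact PadicInt.tendsto_zero_of_factorial_dvd fun k =>
    factorial_dvd_coeff_of_mem_ascFactorialFiltration (hN.pow_apply_mem k g) n

theorem eq_zero_of_apply_eq_self (hN : ShiftsAscFactorialFiltration N) {e : ℤ_[p]⟦X⟧}
    (he : N e = e) : e = 0 := by
  ext n
  refine PadicInt.eq_zero_of_forall_factorial_dvd fun k => ?_
  have hfix : (N ^ k) e = e := by rw [Module.End.pow_apply, Function.iterate_fixed he]
  exact factorial_dvd_coeff_of_mem_ascFactorialFiltration (hfix ▸ hN.pow_apply_mem k e) n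

end PowerSeries.ShiftsAscFactorialFiltration

open PowerSeries.WithPiTopology in
theorem PowerSeries.bijective_sub_sum_smul_derivative_pow_apply {p : ℕ} [Fact p.Prime]
    (c : ℕ → ℤ_[p]) (m : ℕ) :
    Function.Bijective fun w : ℤ_[p]⟦X⟧ =>
      w - (∑ i ∈ range m, c i • (d⁄dX ℤ_[p] : Module.End ℤ_[p] ℤ_[p]⟦X⟧) ^ (i + 1)) w := by
  set N := ∑ i ∈ range m, c i • (d⁄dX ℤ_[p] : Module.End ℤ_[p] ℤ_[p]⟦X⟧) ^ (i + 1)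
  have hN : ShiftsAscFactorialFiltration N :=
    shiftsAscFactorialFiltration_sum_smul_derivative_pow c m
  refine ⟨fun w₁ w₂ (h : w₁ - N w₁ = w₂ - N w₂) => ?_, fun g => ?_⟩
  · refine sub_eq_zero.mp (hN.eq_zero_of_apply_eq_self ?_)
    rw [map_sub]
    linear_combination -h
  · obtain ⟨s, hs⟩ := hN.summable_pow_apply g
    exact ⟨s, hs.sub_apply_eq (continuous_sum_smul_derivative_pow c m)⟩

/-- For integer coefficients `a i` with `p` prime not dividing `a 0`, the equation
`a_m w^{(m)} + ... + a_1 w' + a_0 w = f` has a unique solution in `ℤ_p⟦x⟧`. -/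
theorem padic_existence_uniqueness (p : ℕ) [Fact p.Prime] (m : ℕ) (a : ℕ → ℤ)
    (h0 : ¬ (p : ℤ) ∣ a 0) (f : PowerSeries ℤ_[p]) :
    ∃! w : PowerSeries ℤ_[p],
      ∑ i ∈ Finset.range (m + 1),
        PowerSeries.C ((a i : ℤ_[p])) * (PowerSeries.derivativeFun^[i] w) = f := by
  obtain ⟨v, hv⟩ := (PadicInt.isUnit_intCast_of_not_dvd h0).exists_left_inv
  simp_rw [sum_C_mul_iterate_derivativeFun_eq_smul_sub (a := fun i => (a i : ℤ_[p])) hv m]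
  have hcancel : ∀ g, (a 0 : ℤ_[p]) • g = f ↔ g = v • f := fun g =>
    ⟨fun h => by rw [← h, smul_smul, hv, one_smul],
      fun h => by rw [h, smul_smul, mul_comm, hv, one_smul]⟩
  simp_rw [hcancel]
  exact (bijective_sub_sum_smul_derivative_pow_apply _ m).existsUnique (v • f)
end

section
/- The differential equation y' + y = 1 + x + x^2 + x^3 + ... has no solution y ∈ ℤ[[x]], but for every prime p it has a unique solution in ℤ_p[[x]]. -/
/-!
Comparing coefficients, `y' + y = ∑ xᵏ` says `(k + 1) aₖ₊₁ + aₖ = 1` for all `k`. Over `ℤ` this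
forces `aₖ ≠ 0` for `k ≥ 1` (otherwise `k + 1` divides `1`), and then
`(k + 1) |aₖ₊₁| ≤ 1 + |aₖ|` makes `|aₖ|` strictly decreasing from `k = 2` on, which is absurd.
Over `ℤ_p` we have `n! → 0`, so `aₖ = ∑ₙ (-1)ⁿ (k + n)! / k!` converges and solves the recurrence;
the difference `d` of two solutions satisfies `dⱼ = ± (j + n)! / j! · dⱼ₊ₙ` for every `n`, hence
`d = 0`.
-/

open Filter Topology PowerSeries
open scoped Nat

set_option linter.deprecated false in
theorem PowerSeries.derivativeFun_add_self_eq_mk_one_iff {R : Type*} [CommSemiring R]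
    (y : R⟦X⟧) :
    derivativeFun y + y = mk (fun _ => 1) ↔ ∀ k : ℕ, coeff (k + 1) y * (k + 1) + coeff k y = 1 := by
  refine PowerSeries.ext_iff.trans (forall_congr' fun k => ?_)
  rw [map_add, ← coeff_derivative, coeff_mk]
  rfl

theorem Int.false_of_forall_mul_succ_add_eq_one (a : ℕ → ℤ)
    (h : ∀ k : ℕ, a (k + 1) * (k + 1) + a k = 1) : False := by
  have ne_zero (k : ℕ) : a (k + 1) ≠ 0 := by
    intro hk
    have h1 := h (k + 1)
    rw [hk, add_zero] at h1
    have := Int.eq_one_of_mul_eq_one_left (by positivity) h1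
    omega
  have descent (k : ℕ) : (a (k + 3)).natAbs < (a (k + 2)).natAbs := by
    have h1 : |a (k + 3)| * (k + 3) = |1 - a (k + 2)| := by
      rw [← h (k + 2), add_sub_cancel_right, abs_mul]
      push_cast
      rw [abs_of_nonneg (by positivity : (0 : ℤ) ≤ k + 2 + 1)]
      ring
    have h2 : |1 - a (k + 2)| ≤ 1 + |a (k + 2)| := by
      simpa using abs_sub (1 : ℤ) (a (k + 2))
    have h3 : 1 ≤ |a (k + 2)| := Int.one_le_abs (ne_zero _)
    zify
    nlinarith [mul_nonneg (abs_nonneg (a (k + 3))) (Int.natCast_nonneg k)]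
  exact not_strictAnti_of_wellFoundedLT (fun k => (a (k + 2)).natAbs)
    (strictAnti_nat_of_succ_lt descent)

theorem Nat.pow_div_dvd_factorial (p n : ℕ) [Fact p.Prime] : p ^ (n / p) ∣ n ! := by
  have hle : n / p ≤ padicValNat p n ! := by
    rw [← padicValNat_mul_div_factorial, padicValNat_factorial_mul]
    exact Nat.le_add_left _ _
  exact (Nat.pow_dvd_pow p hle).trans pow_padicValNat_dvd

theorem eq_alternating_ascFactorial_mul_of_forall_mul_succ_add_eq_zero {R : Type*} [CommRing R]
    (d : ℕ → R) (h : ∀ k : ℕ, d (k + 1) * (k + 1) + d k = 0) (j n : ℕ) :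
    d j = (-1) ^ n * ((j + 1).ascFactorial n : R) * d (j + n) := by
  induction n with
  | zero => simp
  | succ n ih =>
    rw [ih, eq_neg_of_add_eq_zero_right (h (j + n)), Nat.ascFactorial_succ, ← add_assoc]
    push_cast
    ring

namespace PadicInt

variable {p : ℕ} [Fact p.Prime]

theorem norm_le_norm_p_pow_of_dvd {x : ℤ_[p]} {k : ℕ} (h : (p : ℤ_[p]) ^ k ∣ x) :
    ‖x‖ ≤ ‖(p : ℤ_[p])‖ ^ k := by
  obtain ⟨c, rfl⟩ := h
  rw [norm_mul, norm_pow]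
  exact mul_le_of_le_one_right (by positivity) (norm_le_one c)

theorem tendsto_ascFactorial_atTop_nhds_zero (m : ℕ) :
    Tendsto (fun n : ℕ => (m.ascFactorial n : ℤ_[p])) atTop (𝓝 0) := by
  have hdvd (n : ℕ) : (p : ℤ_[p]) ^ (n / p) ∣ m.ascFactorial n := by
    simpa using Nat.cast_dvd_cast (α := ℤ_[p])
      ((Nat.pow_div_dvd_factorial p n).trans (Nat.factorial_dvd_ascFactorial m n))
  have hpow : Tendsto (fun n : ℕ => ‖(p : ℤ_[p])‖ ^ (n / p)) atTop (𝓝 0) :=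
    (tendsto_pow_atTop_nhds_zero_of_lt_one (norm_nonneg _)
      (norm_natCast_lt_one_iff.2 dvd_rfl)).comp
      (Nat.tendsto_div_const_atTop (Fact.out : p.Prime).ne_zero)
  exact squeeze_zero_norm (fun n => norm_le_norm_p_pow_of_dvd (hdvd n)) hpow

theorem summable_alternating_ascFactorial (m : ℕ) :
    Summable fun n : ℕ => (-1) ^ n * (m.ascFactorial n : ℤ_[p]) := by
  refine NonarchimedeanAddGroup.summable_of_tendsto_cofinite_zero ?_
  rw [Nat.cofinite_eq_atTop]
  refine squeeze_zero_norm (fun n => ?_) (tendsto_zero_iff_norm_tendsto_zero.1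
    (tendsto_ascFactorial_atTop_nhds_zero (p := p) m))
  simp [norm_mul]

theorem eq_zero_of_forall_mul_succ_add_eq_zero (d : ℕ → ℤ_[p])
    (h : ∀ k : ℕ, d (k + 1) * (k + 1) + d k = 0) : d = 0 := by
  ext j
  refine norm_le_zero_iff.1 (ge_of_tendsto' (tendsto_zero_iff_norm_tendsto_zero.1
    (tendsto_ascFactorial_atTop_nhds_zero (p := p) (j + 1))) fun n => ?_)
  rw [eq_alternating_ascFactorial_mul_of_forall_mul_succ_add_eq_zero d h j n]
  simpa [norm_mul] using mul_le_of_le_one_right (norm_nonneg _) (norm_le_one (d (j + n)))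

variable (p) in
/-- `∑ₙ (-1)ⁿ (k + n)! / k!`, written with `(k + 1).ascFactorial n = (k + n)! / k!`. -/
noncomputable def alternatingAscFactorialSum (k : ℕ) : ℤ_[p] :=
  ∑' n : ℕ, (-1) ^ n * ((k + 1).ascFactorial n : ℤ_[p])

theorem alternatingAscFactorialSum_succ_mul_add (k : ℕ) :
    alternatingAscFactorialSum p (k + 1) * (k + 1) + alternatingAscFactorialSum p k = 1 := by
  have hshift (n : ℕ) : (-1) ^ (n + 1) * ((k + 1).ascFactorial (n + 1) : ℤ_[p]) =
      -((-1) ^ n * ((k + 1 + 1).ascFactorial n : ℤ_[p]) * (k + 1)) := by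
    rw [Nat.ascFactorial_succ, ← Nat.succ_ascFactorial]
    push_cast
    ring
  have hsplit : alternatingAscFactorialSum p k =
      1 - alternatingAscFactorialSum p (k + 1) * (k + 1) := by
    rw [alternatingAscFactorialSum, (summable_alternating_ascFactorial _).tsum_eq_zero_add]
    simp only [hshift, tsum_neg, (summable_alternating_ascFactorial _).tsum_mul_right]
    simp [alternatingAscFactorialSum, sub_eq_add_neg]
  rw [hsplit, add_sub_cancel]

end PadicInt

/-- The equation `y' + y = 1 + x + x² + ...` has no solution in `ℤ⟦x⟧`, but for every
prime `p` it has a unique solution in `ℤ_p⟦x⟧`. -/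
theorem geometric_nonhomogeneity_example :
    (¬ ∃ y : PowerSeries ℤ,
      PowerSeries.derivativeFun y + y = PowerSeries.mk fun _ => (1 : ℤ)) ∧
    (∀ (p : ℕ) [Fact p.Prime], ∃! y : PowerSeries ℤ_[p],
      PowerSeries.derivativeFun y + y = PowerSeries.mk fun _ => (1 : ℤ_[p])) := by
  refine ⟨fun ⟨y, hy⟩ => ?_, fun p _ => ?_⟩
  · exact Int.false_of_forall_mul_succ_add_eq_one (fun k => coeff k y)
      ((derivativeFun_add_self_eq_mk_one_iff y).1 hy)
  · refine ⟨mk (PadicInt.alternatingAscFactorialSum p),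
      (derivativeFun_add_self_eq_mk_one_iff _).2 fun k => by
        simpa using PadicInt.alternatingAscFactorialSum_succ_mul_add k, fun y hy => ?_⟩
    ext k
    have hdiff := PadicInt.eq_zero_of_forall_mul_succ_add_eq_zero
      (fun k => coeff k y - PadicInt.alternatingAscFactorialSum p k) fun k => by
        linear_combination (derivativeFun_add_self_eq_mk_one_iff y).1 hy k -
          PadicInt.alternatingAscFactorialSum_succ_mul_add (p := p) k
    simpa [sub_eq_zero] using congrFun hdiff k
end

section
/- Let K be a commutative ring, a_0, ..., a_m ∈ K with a_0 invertible, and (c_k) the coefficients of (a_m t^m + ... + a_0)^{-1} in K[[t]]. Then the formal Laurent series E(x) = Σ_{k≥0} c_k (-1)^k k! x^{-k-1} is the unique element of (1/x)K[[1/x]] satisfying a_m E^{(m)} + ... + a_1 E' + a_0 E = 1/x. -/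
/-!
The formal Laplace transform of `f(-t)`, `∑ fₖ tᵏ ↦ ∑ (-1)ᵏ k! fₖ x^{-k-1}`, turns multiplication
by `t` into `d/dx`, so it carries `P(t) · ∑ cₖ tᵏ = 1` to `P(D) E = 1/x`. Uniqueness holds because
`P(D)` is triangular in the basis `x^{-k-1}`, with the unit `a₀` on the diagonal.
-/

/-- Formal derivative on Laurent series in `1/x`; `w n` is the coefficient of `x^{-(n+1)}`. -/
noncomputable def laurentDeriv (K : Type*) [CommRing K] (w : ℕ → K) : ℕ → K :=
  fun j => match j with
  | 0 => 0
  | n + 1 => -((n + 1 : ℕ) : K) * w n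

open PowerSeries Set

noncomputable def laplaceNeg (K : Type*) [CommRing K] : PowerSeries K →ₗ[K] ℕ → K where
  toFun f k := (-1) ^ k * (k.factorial : K) * coeff k f
  map_add' f g := by funext k; simp only [map_add, Pi.add_apply]; ring
  map_smul' r f := by funext k; simp only [coeff_smul, Pi.smul_apply, smul_eq_mul,
    RingHom.id_apply]; ring

section

variable {K : Type*} [CommRing K]

lemma laurentDeriv_laplaceNeg (f : PowerSeries K) :
    laurentDeriv K (laplaceNeg K f) = laplaceNeg K (X * f) := by
  funext j
  cases j with
  | zero => simp [laurentDeriv, laplaceNeg]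
  | succ n =>
    simp only [laurentDeriv, laplaceNeg, LinearMap.coe_mk, AddHom.coe_mk, coeff_succ_X_mul,
      Nat.factorial_succ]
    push_cast
    ring

lemma iterate_laurentDeriv_laplaceNeg (i : ℕ) (f : PowerSeries K) :
    (laurentDeriv K)^[i] (laplaceNeg K f) = laplaceNeg K (X ^ i * f) := by
  induction i with
  | zero => simp
  | succ i ih =>
    rw [Function.iterate_succ_apply', ih, laurentDeriv_laplaceNeg, pow_succ', mul_assoc]

lemma laplaceNeg_one : laplaceNeg K 1 = fun j => if j = 0 then 1 else 0 := by
  funext j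
  rcases eq_or_ne j 0 with rfl | hj <;> simp [laplaceNeg, coeff_one, *]

lemma sum_smul_iterate_laurentDeriv_laplaceNeg (m : ℕ) (a : ℕ → K) (f : PowerSeries K) :
    ∑ i ∈ Finset.range (m + 1), a i • (laurentDeriv K)^[i] (laplaceNeg K f) =
      laplaceNeg K ((∑ i ∈ Finset.range (m + 1), monomial i (a i)) * f) := by
  simp only [iterate_laurentDeriv_laplaceNeg, ← map_smul, ← map_sum, Finset.sum_mul,
    monomial_eq_C_mul_X_pow, smul_eq_C_mul, mul_assoc]

lemma laurentDeriv_eqOn_Iio_succ {v w : ℕ → K} {n : ℕ} (h : EqOn v w (Iio n)) :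
    EqOn (laurentDeriv K v) (laurentDeriv K w) (Iio (n + 1)) := by
  rintro (_ | k) hk
  · rfl
  · simp only [laurentDeriv, h (Nat.succ_lt_succ_iff.mp hk)]

lemma iterate_laurentDeriv_eqOn_Iio_add {v w : ℕ → K} {n : ℕ} (h : EqOn v w (Iio n)) (i : ℕ) :
    EqOn ((laurentDeriv K)^[i] v) ((laurentDeriv K)^[i] w) (Iio (n + i)) := by
  induction i with
  | zero => exact h
  | succ i ih =>
    simpa only [Function.iterate_succ_apply', ← add_assoc] using laurentDeriv_eqOn_Iio_succ ih

lemma eq_of_sum_smul_iterate_laurentDeriv_eq {m : ℕ} {a : ℕ → K} (h0 : IsUnit (a 0))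
    {v w : ℕ → K}
    (h : ∑ i ∈ Finset.range (m + 1), a i • (laurentDeriv K)^[i] v =
      ∑ i ∈ Finset.range (m + 1), a i • (laurentDeriv K)^[i] w) :
    v = w := by
  funext j
  induction j using Nat.strong_induction_on with
  | _ j ih =>
    have hj := congrFun h j
    simp only [Finset.sum_apply, Pi.smul_apply, smul_eq_mul, Finset.sum_range_succ',
      Function.iterate_zero, id_eq] at hj
    have higher : ∀ i ∈ Finset.range m, a (i + 1) * (laurentDeriv K)^[i + 1] v j =
        a (i + 1) * (laurentDeriv K)^[i + 1] w j := fun i _ => by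
      rw [iterate_laurentDeriv_eqOn_Iio_add (fun k hk => ih k hk) (i + 1) (by simp)]
    rw [Finset.sum_congr rfl higher] at hj
    exact h0.mul_left_cancel (add_left_cancel hj)

end

/-- With `c` the coefficients of `(a_m t^m + ... + a_0)⁻¹` (`a 0` invertible), the Laurent
series `E(x) = ∑_k c_k (-1)^k k! x^{-k-1}` is the unique element of `(1/x)K[[1/x]]`
satisfying `a_m E^{(m)} + ... + a_1 E' + a_0 E = 1/x`. -/
theorem fundamental_solution_laurent (K : Type*) [CommRing K] (m : ℕ) (a : ℕ → K)
    (h0 : IsUnit (a 0)) (c : ℕ → K)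
    (hc : PowerSeries.mk c *
      (∑ i ∈ Finset.range (m + 1), PowerSeries.monomial i (a i)) = 1) :
    (∑ i ∈ Finset.range (m + 1), a i •
        ((laurentDeriv K)^[i] (fun k => c k * (-1) ^ k * (Nat.factorial k : K)))) =
      (fun j => if j = 0 then (1 : K) else 0) ∧
    ∀ w : ℕ → K,
      (∑ i ∈ Finset.range (m + 1), a i • ((laurentDeriv K)^[i] w)) =
        (fun j => if j = 0 then (1 : K) else 0) →
      w = fun k => c k * (-1) ^ k * (Nat.factorial k : K) := by
  have hE : (fun k => c k * (-1) ^ k * (Nat.factorial k : K)) = laplaceNeg K (mk c) := by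
    funext k
    simp only [laplaceNeg, LinearMap.coe_mk, AddHom.coe_mk, coeff_mk]
    ring
  have solves : ∑ i ∈ Finset.range (m + 1), a i • (laurentDeriv K)^[i] (laplaceNeg K (mk c)) =
      fun j => if j = 0 then 1 else 0 := by
    rw [sum_smul_iterate_laurentDeriv_laplaceNeg, mul_comm, hc, laplaceNeg_one]
  rw [hE]
  exact ⟨solves, fun w hw => eq_of_sum_smul_iterate_laurentDeriv_eq h0 (hw.trans solves.symm)⟩
end

section
/- Let F be a complete field of characteristic zero with non-Archimedean absolute value, K its valuation ring, and a_0, ..., a_m ∈ K with |a_0| = 1 and |a_i| < 1 for 1 ≤ i ≤ m. Let E(x) = Σ_{k≥0} c_k (-1)^k k! x^{-k-1} be the fundamental solution, where (c_k) are the coefficients of (a_m t^m + ... + a_0)^{-1}. Then for every f ∈ K[[x]], the convolution w = E * f = Σ_{i≥0} c_i f^{(i)} is the unique solution in K[[x]] of a_m w^{(m)} + ... + a_1 w' + a_0 w = f. -/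
/-!
Write `D = d/dX`. Since `mk c * ∑ aᵢ Xⁱ = 1`, the operator `∑ cᵢ Dⁱ` is a formal inverse of
`L = ∑ aᵢ Dⁱ`, so `L (∑ cᵢ Dⁱ f) = f` as soon as the coefficientwise sums converge. They do: `Dⁱ`
preserves `K⟦X⟧` because `‖(n : F)‖ ≤ 1`, and the recursion `a₀ cₙ = -∑_{1 ≤ i ≤ m} aᵢ cₙ₋ᵢ`
with `‖a₀‖ = 1` gives `‖cₙ‖ ≤ b ^ (n / (m + 1))`, where `b = max_{i ≥ 1} ‖aᵢ‖ < 1`. For uniqueness,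
if `L d = 0` with `d ∈ K⟦X⟧` then `a₀ dₖ = -∑_{i ≥ 1} aᵢ (Dⁱ d)ₖ`, so by induction every
coefficient of `d` has norm at most `b ^ N` for all `N`.
-/

open PowerSeries Finset Filter Topology

theorem Finset.exists_nonneg_lt_forall_le_of_forall_lt {ι : Type*} (s : Finset ι) {f : ι → ℝ}
    {r : ℝ} (hr : 0 < r) (h : ∀ i ∈ s, f i < r) : ∃ b, 0 ≤ b ∧ b < r ∧ ∀ i ∈ s, f i ≤ b := by
  rcases s.eq_empty_or_nonempty with rfl | hs
  · exact ⟨0, le_rfl, hr, by simp⟩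
  obtain ⟨i, hi, hmax⟩ := s.exists_max_image f hs
  exact ⟨max 0 (f i), le_max_left _ _, max_lt hr (h i hi),
    fun j hj => (hmax j hj).trans (le_max_right _ _)⟩

namespace PowerSeries

theorem coeff_mk_mul_sum_monomial {R : Type*} [CommSemiring R] (c a : ℕ → R) (s : Finset ℕ)
    (n : ℕ) :
    coeff n (mk c * ∑ j ∈ s, monomial j (a j)) = ∑ j ∈ s, if j ≤ n then c (n - j) * a j else 0 := by
  simp only [mul_sum, map_sum, monomial_eq_C_mul_X_pow, ← mul_assoc, coeff_mul_X_pow',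
    coeff_mul_C, coeff_mk]

section TopologicalSemiring

variable {R : Type*} [CommSemiring R] [TopologicalSpace R]

/-- The convolution `E * f = ∑ cᵢ f⁽ⁱ⁾` with the fundamental solution, summed coefficientwise. -/
noncomputable def tsumIterateDerivative (c : ℕ → R) (f : R⟦X⟧) : R⟦X⟧ :=
  mk fun k => ∑' i, c i * coeff k ((d⁄dX R)^[i] f)

theorem coeff_tsumIterateDerivative (c : ℕ → R) (f : R⟦X⟧) (k : ℕ) :
    coeff k (tsumIterateDerivative c f) =
      ∑' i, c i * ((i + k).choose i : R) * (i.factorial : R) * coeff (i + k) f := by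
  refine (coeff_mk _ _).trans (tsum_congr fun i => ?_)
  rw [coeff_iterate_derivative, Nat.ascFactorial_eq_factorial_mul_choose, add_comm k i]
  push_cast
  ring

theorem sum_mul_tsum_eq_tsum_coeff_mul [IsTopologicalSemiring R] [T2Space R]
    {c a h : ℕ → R} {s : Finset ℕ} (hs : ∀ j ∈ s, Summable fun i => c i * h (i + j)) :
    ∑ j ∈ s, a j * ∑' i, c i * h (i + j) =
      ∑' n, coeff n (mk c * ∑ j ∈ s, monomial j (a j)) * h n := by
  set g : ℕ → ℕ → R := fun j n => if j ≤ n then a j * (c (n - j) * h n) else 0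
  have hg : ∀ n, coeff n (mk c * ∑ j ∈ s, monomial j (a j)) * h n = ∑ j ∈ s, g j n := by
    intro n
    simp only [coeff_mk_mul_sum_monomial, sum_mul, g, ite_mul, zero_mul]
    exact sum_congr rfl fun j _ => by split_ifs <;> ring
  have hg_shift : ∀ j, (fun i => g j (i + j)) = fun i => a j * (c i * h (i + j)) := by
    intro j; ext i; simp [g]
  have hg_supp : ∀ j, ∀ n ∉ Set.range (· + j), g j n = 0 := by
    intro j n hn
    refine if_neg fun hjn => hn ⟨n - j, ?_⟩
    simp only; omega
  have hg_summable : ∀ j ∈ s, Summable (g j) := fun j hj =>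
    ((add_left_injective j).summable_iff (hg_supp j)).mp <| by
      rw [Function.comp_def, hg_shift]; exact (hs j hj).mul_left (a j)
  rw [tsum_congr hg, Summable.tsum_finsetSum hg_summable]
  refine sum_congr rfl fun j hj => ?_
  rw [← (hs j hj).tsum_mul_left, ← hg_shift]
  exact (add_left_injective j).tsum_eq (Function.support_subset_iff'.mpr (hg_supp j))

end TopologicalSemiring

section TopologicalSemifield

variable {F : Type*} [Semifield F] [TopologicalSpace F] [IsTopologicalSemiring F] [T2Space F]

theorem iterate_derivative_tsumIterateDerivative (c : ℕ → F) (f : F⟦X⟧) (j : ℕ) :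
    (d⁄dX F)^[j] (tsumIterateDerivative c f) = tsumIterateDerivative c ((d⁄dX F)^[j] f) := by
  ext k
  rw [tsumIterateDerivative, coeff_iterate_derivative]
  simp only [tsumIterateDerivative, coeff_mk, ← tsum_mul_left]
  refine tsum_congr fun i => ?_
  rw [← Function.iterate_add_apply, Nat.add_comm i j, Function.iterate_add_apply,
    coeff_iterate_derivative ((d⁄dX F)^[i] f), mul_left_comm]

theorem sum_C_mul_iterate_derivative_tsumIterateDerivative {m : ℕ} {a c : ℕ → F} {f : F⟦X⟧}
    (hc : mk c * ∑ j ∈ range (m + 1), monomial j (a j) = 1)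
    (hs : ∀ k j, Summable fun i => c i * coeff k ((d⁄dX F)^[i + j] f)) :
    ∑ j ∈ range (m + 1), C (a j) * (d⁄dX F)^[j] (tsumIterateDerivative c f) = f := by
  ext k
  simp only [map_sum, coeff_C_mul, iterate_derivative_tsumIterateDerivative]
  simp only [tsumIterateDerivative, coeff_mk, ← Function.iterate_add_apply]
  rw [sum_mul_tsum_eq_tsum_coeff_mul (h := fun n => coeff k ((d⁄dX F)^[n] f)) fun j _ => hs k j,
    hc, tsum_eq_single 0 fun n hn => by rw [coeff_one, if_neg hn, zero_mul]]
  simp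

end TopologicalSemifield

section Ultrametric

variable {F : Type*} [NormedField F] [IsUltrametricDist F] {m : ℕ} {a : ℕ → F} {b : ℝ}

theorem norm_le_of_sum_mul_eq_zero (h0 : ‖a 0‖ = 1) (hab : ∀ i ∈ Icc 1 m, ‖a i‖ ≤ b)
    (hb0 : 0 ≤ b) {y : ℕ → F} {B : ℝ} (hB0 : 0 ≤ B) (hy : ∀ j ∈ Icc 1 m, ‖y j‖ ≤ B)
    (h : ∑ j ∈ range (m + 1), a j * y j = 0) : ‖y 0‖ ≤ b * B := by
  rw [sum_range_succ', add_eq_zero_iff_neg_eq] at h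
  calc ‖y 0‖ = ‖a 0 * y 0‖ := by rw [norm_mul, h0, one_mul]
    _ = ‖∑ j ∈ range m, a (j + 1) * y (j + 1)‖ := by rw [← h, norm_neg]
    _ ≤ b * B := by
      refine IsUltrametricDist.norm_sum_le_of_forall_le_of_nonneg (by positivity) fun j hj => ?_
      have hj : j + 1 ∈ Icc 1 m := by simp only [mem_Icc, mem_range] at hj ⊢; omega
      rw [norm_mul]
      exact mul_le_mul (hab _ hj) (hy _ hj) (norm_nonneg _) hb0

theorem norm_coeff_le_pow_of_mk_mul_eq_one (h0 : ‖a 0‖ = 1) (hab : ∀ i ∈ Icc 1 m, ‖a i‖ ≤ b)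
    (hb0 : 0 ≤ b) (hb1 : b ≤ 1) {c : ℕ → F}
    (hc : mk c * ∑ j ∈ range (m + 1), monomial j (a j) = 1) (n : ℕ) :
    ‖c n‖ ≤ b ^ (n / (m + 1)) := by
  induction n using Nat.strong_induction_on with
  | _ n ih =>
    have hcoeff := congrArg (coeff n) hc
    rw [coeff_mk_mul_sum_monomial, coeff_one] at hcoeff
    rcases n.eq_zero_or_pos with rfl | hn
    · rw [sum_eq_single_of_mem 0 (by simp) fun j _ hj => if_neg (by omega), if_pos le_rfl,
        if_pos rfl] at hcoeff
      simpa [h0] using (congrArg norm hcoeff).le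
    calc ‖c n‖ ≤ b * b ^ (n / (m + 1) - 1) := by
          refine norm_le_of_sum_mul_eq_zero (y := fun j => if j ≤ n then c (n - j) else 0)
            h0 hab hb0 (by positivity) (fun j hj => ?_) ?_
          · simp only [mem_Icc] at hj
            split_ifs with hjn
            · have hdiv : n / (m + 1) ≤ (n - j) / (m + 1) + 1 := by
                rw [← Nat.add_div_right _ m.succ_pos]
                exact Nat.div_le_div_right (by omega)
              exact (ih _ (by omega)).trans
                (pow_le_pow_of_le_one hb0 hb1 (Nat.sub_le_iff_le_add.mpr hdiv))
            · simpa using pow_nonneg hb0 _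
          · rw [if_neg hn.ne'] at hcoeff
            refine Eq.trans (sum_congr rfl fun j _ => ?_) hcoeff
            split_ifs <;> simp [mul_comm]
      _ = b ^ (n / (m + 1) - 1 + 1) := by ring
      _ ≤ b ^ (n / (m + 1)) := pow_le_pow_of_le_one hb0 hb1 (by omega)

theorem eq_zero_of_sum_mul_ascFactorial_eq_zero (h0 : ‖a 0‖ = 1)
    (hab : ∀ i ∈ Icc 1 m, ‖a i‖ ≤ b) (hb0 : 0 ≤ b) (hb1 : b < 1) {d : ℕ → F}
    (hd : ∀ n, ‖d n‖ ≤ 1)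
    (h : ∀ k, ∑ j ∈ range (m + 1), a j * ((k + 1).ascFactorial j * d (k + j)) = 0) : d = 0 := by
  have hpow : ∀ N k, ‖d k‖ ≤ b ^ N := by
    intro N
    induction N with
    | zero => simpa using hd
    | succ N ih =>
      intro k
      rw [pow_succ']
      simpa using norm_le_of_sum_mul_eq_zero h0 hab hb0 (pow_nonneg hb0 N) (fun j _ => by
        rw [norm_mul]
        exact (mul_le_mul (IsUltrametricDist.norm_natCast_le_one F _) (ih _) (norm_nonneg _)
          zero_le_one).trans_eq (one_mul _)) (h k)
  funext k
  exact norm_le_zero_iff.mp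
    (ge_of_tendsto' (tendsto_pow_atTop_nhds_zero_of_lt_one hb0 hb1) (hpow · k))

theorem eq_of_sum_C_mul_iterate_derivative_eq (h0 : ‖a 0‖ = 1)
    (hab : ∀ i ∈ Icc 1 m, ‖a i‖ ≤ b) (hb0 : 0 ≤ b) (hb1 : b < 1) {v w : F⟦X⟧}
    (hv : ∀ k, ‖coeff k v‖ ≤ 1) (hw : ∀ k, ‖coeff k w‖ ≤ 1)
    (h : ∑ i ∈ range (m + 1), C (a i) * (d⁄dX F)^[i] v =
      ∑ i ∈ range (m + 1), C (a i) * (d⁄dX F)^[i] w) : v = w := by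
  have hsub := eq_zero_of_sum_mul_ascFactorial_eq_zero h0 hab hb0 hb1
    (d := fun n => coeff n v - coeff n w)
    (fun n => by
      rw [sub_eq_add_neg]
      exact (IsUltrametricDist.norm_add_le_max _ _).trans
        (max_le (hv n) ((norm_neg _).trans_le (hw n))))
    fun k => by
      have hk := congrArg (coeff k) h
      simp only [map_sum, coeff_C_mul, coeff_iterate_derivative] at hk
      simp only [mul_sub, sum_sub_distrib, hk, sub_self]
  ext k
  exact sub_eq_zero.mp (congrFun hsub k)

theorem norm_coeff_iterate_derivative_le_one {f : F⟦X⟧} (hf : ∀ k, ‖coeff k f‖ ≤ 1) (i k : ℕ) :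
    ‖coeff k ((d⁄dX F)^[i] f)‖ ≤ 1 := by
  rw [coeff_iterate_derivative, norm_mul]
  exact mul_le_one₀ (IsUltrametricDist.norm_natCast_le_one F _) (norm_nonneg _) (hf _)

theorem norm_coeff_tsumIterateDerivative_le_one {c : ℕ → F} (hc : ∀ i, ‖c i‖ ≤ 1) {f : F⟦X⟧}
    (hf : ∀ k, ‖coeff k f‖ ≤ 1) (k : ℕ) : ‖coeff k (tsumIterateDerivative c f)‖ ≤ 1 := by
  rw [tsumIterateDerivative, coeff_mk]
  refine IsUltrametricDist.norm_tsum_le_of_forall_le_of_nonneg zero_le_one fun i => ?_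
  rw [norm_mul]
  exact mul_le_one₀ (hc i) (norm_nonneg _) (norm_coeff_iterate_derivative_le_one hf i k)

theorem summable_mul_of_tendsto_zero [CompleteSpace F] {c h : ℕ → F}
    (hc : Tendsto c atTop (𝓝 0)) (hh : ∀ n, ‖h n‖ ≤ 1) : Summable fun n => c n * h n := by
  refine NonarchimedeanAddGroup.summable_of_tendsto_cofinite_zero ?_
  rw [Nat.cofinite_eq_atTop]
  refine squeeze_zero_norm (fun n => ?_) (tendsto_zero_iff_norm_tendsto_zero.mp hc)
  rw [norm_mul]
  exact mul_le_of_le_one_right (norm_nonneg _) (hh n)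

end Ultrametric

end PowerSeries

theorem fundamental_solution_convolution_general (F : Type*) [NormedField F]
    [CompleteSpace F] (hna : ∀ x y : F, ‖x + y‖ ≤ max ‖x‖ ‖y‖)
    (m : ℕ) (a : ℕ → F) (h0 : ‖a 0‖ = 1)
    (ha : ∀ i, 1 ≤ i → i ≤ m → ‖a i‖ < 1) (c : ℕ → F)
    (hc : PowerSeries.mk c *
      (∑ i ∈ Finset.range (m + 1), PowerSeries.monomial i (a i)) = 1)
    (f : PowerSeries F) (hf : ∀ k, ‖PowerSeries.coeff k f‖ ≤ 1) :
    (∀ k : ℕ, ‖∑' i : ℕ,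
      c i * (Nat.choose (i + k) i : F) * (Nat.factorial i : F)
        * PowerSeries.coeff (i + k) f‖ ≤ 1) ∧
    (∑ i ∈ Finset.range (m + 1),
      PowerSeries.C (a i) * (PowerSeries.derivativeFun^[i]
        (PowerSeries.mk fun k => ∑' i : ℕ,
          c i * (Nat.choose (i + k) i : F) * (Nat.factorial i : F)
            * PowerSeries.coeff (i + k) f)) = f) ∧
    ∀ v : PowerSeries F, (∀ k, ‖PowerSeries.coeff k v‖ ≤ 1) →
      ∑ i ∈ Finset.range (m + 1),
        PowerSeries.C (a i) * (PowerSeries.derivativeFun^[i] v) = f →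
      v = PowerSeries.mk fun k => ∑' i : ℕ,
        c i * (Nat.choose (i + k) i : F) * (Nat.factorial i : F)
          * PowerSeries.coeff (i + k) f := by
  have := IsUltrametricDist.isUltrametricDist_of_forall_norm_add_le_max_norm hna
  obtain ⟨b, hb0, hb1, hab⟩ := (Icc 1 m).exists_nonneg_lt_forall_le_of_forall_lt (f := (‖a ·‖))
    one_pos fun i hi => ha i (mem_Icc.mp hi).1 (mem_Icc.mp hi).2
  have hcb := norm_coeff_le_pow_of_mk_mul_eq_one h0 hab hb0 hb1.le hc
  have hc0 : Tendsto c atTop (𝓝 0) := squeeze_zero_norm hcb <|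
    (tendsto_pow_atTop_nhds_zero_of_lt_one hb0 hb1).comp
      (Nat.tendsto_div_const_atTop m.succ_ne_zero)
  have hS : (mk fun k => ∑' i, c i * ((i + k).choose i : F) * (i.factorial : F) * coeff (i + k) f)
      = tsumIterateDerivative c f := by
    ext k
    rw [coeff_mk, coeff_tsumIterateDerivative]
  have hS1 := norm_coeff_tsumIterateDerivative_le_one
    (fun i => (hcb i).trans (pow_le_one₀ hb0 hb1.le)) hf
  have hsol := sum_C_mul_iterate_derivative_tsumIterateDerivative hc fun k j =>
    summable_mul_of_tendsto_zero hc0 fun i => norm_coeff_iterate_derivative_le_one hf (i + j) k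
  refine ⟨fun k => ?_, hS ▸ hsol, fun v hv hL => hS ▸ ?_⟩
  · rw [← coeff_tsumIterateDerivative]
    exact hS1 k
  · exact eq_of_sum_C_mul_iterate_derivative_eq h0 hab hb0 hb1 hv hS1 (hL.trans hsol.symm)

/-- Over a complete non-Archimedean valued field `F` with valuation ring
`K = {s : ‖s‖ ≤ 1}`, with `‖a 0‖ = 1`, `‖a i‖ < 1` for `1 ≤ i ≤ m`, and `c` the
coefficients of `(a_m t^m + ... + a_0)⁻¹`, for every `f ∈ K⟦x⟧` the convolution
`w = E * f = ∑_i c_i f^{(i)}` lies in `K⟦x⟧` and is the unique solution in `K⟦x⟧` of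
`a_m w^{(m)} + ... + a_1 w' + a_0 w = f`. -/
theorem fundamental_solution_convolution (F : Type*) [NormedField F] [CharZero F]
    [CompleteSpace F] (hna : ∀ x y : F, ‖x + y‖ ≤ max ‖x‖ ‖y‖)
    (m : ℕ) (hm : 1 ≤ m) (a : ℕ → F) (h0 : ‖a 0‖ = 1)
    (ha : ∀ i, 1 ≤ i → i ≤ m → ‖a i‖ < 1) (c : ℕ → F)
    (hc : PowerSeries.mk c *
      (∑ i ∈ Finset.range (m + 1), PowerSeries.monomial i (a i)) = 1)
    (f : PowerSeries F) (hf : ∀ k, ‖PowerSeries.coeff k f‖ ≤ 1) :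
    (∀ k : ℕ, ‖∑' i : ℕ,
      c i * (Nat.choose (i + k) i : F) * (Nat.factorial i : F)
        * PowerSeries.coeff (i + k) f‖ ≤ 1) ∧
    (∑ i ∈ Finset.range (m + 1),
      PowerSeries.C (a i) * (PowerSeries.derivativeFun^[i]
        (PowerSeries.mk fun k => ∑' i : ℕ,
          c i * (Nat.choose (i + k) i : F) * (Nat.factorial i : F)
            * PowerSeries.coeff (i + k) f)) = f) ∧
    ∀ v : PowerSeries F, (∀ k, ‖PowerSeries.coeff k v‖ ≤ 1) →
      ∑ i ∈ Finset.range (m + 1),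
        PowerSeries.C (a i) * (PowerSeries.derivativeFun^[i] v) = f →
      v = PowerSeries.mk fun k => ∑' i : ℕ,
        c i * (Nat.choose (i + k) i : F) * (Nat.factorial i : F)
          * PowerSeries.coeff (i + k) f :=
  fundamental_solution_convolution_general F hna m a h0 ha c hc f hf
end
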